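/- Let d ≥ 1 and let A ∈ ℝ^{d×d} have nonnegative entries such that every complex eigenvalue λ of A (i.e., every root of the characteristic polynomial of A over ℂ) satisfies |λ| < 1. Then 0 < det(I − A) ≤ 1, and det(I − A) = 1 if and only if A is acyclic. (This is the acyclicity characterization underlying the log-determinant constraint h_log(A) = −log det(I − A) used by NOFEARS/DAGMA, which equals the PST function with a_k = 1/k.) -/

import Mathlib

/-- `A` has a cycle of length `k`: there are indices `i₀, …, i_k` with `i₀ = i_k` and
`A (i_{ℓ-1}) (i_ℓ) > 0` for all `ℓ ∈ {1, …, k}`. -/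
def hasCycle {d : ℕ} (A : Matrix (Fin d) (Fin d) ℝ) (k : ℕ) : Prop :=
  ∃ p : ℕ → Fin d, p 0 = p k ∧ ∀ ℓ < k, 0 < A (p ℓ) (p (ℓ + 1))

/-- `A` is acyclic if it has no cycle of any length `k ≥ 1`. -/
def isAcyclic {d : ℕ} (A : Matrix (Fin d) (Fin d) ℝ) : Prop :=
  ∀ k, 1 ≤ k → ¬ hasCycle A k


section DetAcyclicAux

open Polynomial Matrix Module LinearMap


open Polynomial Matrix

section Aux

variable {d : ℕ} {A : Matrix (Fin d) (Fin d) ℝ}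

/-- entries of powers of an entrywise-nonneg matrix are nonneg -/
lemma pow_entry_nonneg (hA : ∀ i j, 0 ≤ A i j) (n : ℕ) : ∀ i j, 0 ≤ (A ^ n) i j := by
  induction n with
  | zero =>
      intro i j
      rw [pow_zero]
      rcases eq_or_ne i j with rfl | h
      · simp
      · simp [Matrix.one_apply, h]
  | succ n ih =>
      intro i j
      rw [pow_succ, Matrix.mul_apply]
      exact Finset.sum_nonneg fun m _ => mul_nonneg (ih i m) (hA m j)

lemma pow_entry_pos_of_path (hA : ∀ i j, 0 ≤ A i j) :
    ∀ (k : ℕ) (p : ℕ → Fin d), (∀ ℓ < k, 0 < A (p ℓ) (p (ℓ + 1))) →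
      0 < (A ^ k) (p 0) (p k) := by
  intro k
  induction k with
  | zero => intro p _; simp [Matrix.one_apply]
  | succ k ih =>
      intro p hp
      rw [pow_succ, Matrix.mul_apply]
      have h1 : 0 < (A ^ k) (p 0) (p k) := ih p fun ℓ hℓ => hp ℓ (by omega)
      have h2 : 0 < A (p k) (p (k + 1)) := hp k (by omega)
      refine Finset.sum_pos' (fun m _ => mul_nonneg (pow_entry_nonneg hA k _ _) (hA _ _)) ?_
      exact ⟨p k, Finset.mem_univ _, mul_pos h1 h2⟩

lemma exists_path_of_pow_entry_pos (hA : ∀ i j, 0 ≤ A i j) :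
    ∀ (k : ℕ) (i j : Fin d), 0 < (A ^ k) i j →
      ∃ p : ℕ → Fin d, p 0 = i ∧ p k = j ∧ ∀ ℓ < k, 0 < A (p ℓ) (p (ℓ + 1)) := by
  intro k
  induction k with
  | zero =>
      intro i j h
      rw [pow_zero] at h
      rcases eq_or_ne i j with rfl | hne
      · exact ⟨fun _ => i, rfl, rfl, by omega⟩
      · simp [Matrix.one_apply, hne] at h
  | succ k ih =>
      intro i j h
      rw [pow_succ, Matrix.mul_apply] at h
      have : ∃ m : Fin d, 0 < (A ^ k) i m * A m j := by
        by_contra hc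
        push_neg at hc
        have : ∑ m, (A ^ k) i m * A m j ≤ 0 := Finset.sum_nonpos fun m _ => hc m
        linarith
      obtain ⟨m, hm⟩ := this
      have h1 : 0 < (A ^ k) i m := by
        rcases (mul_pos_iff.mp hm) with ⟨h1, _⟩ | ⟨h1, _⟩
        · exact h1
        · exact absurd h1 (not_lt.mpr (pow_entry_nonneg hA k _ _))
      have h2 : 0 < A m j := by
        rcases (mul_pos_iff.mp hm) with ⟨_, h2⟩ | ⟨_, h2⟩
        · exact h2
        · exact absurd h2 (not_lt.mpr (hA _ _))
      obtain ⟨p, hp0, hpk, hp⟩ := ih i m h1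
      refine ⟨fun ℓ => if ℓ ≤ k then p ℓ else j, by simp [hp0], by simp, ?_⟩
      intro ℓ hℓ
      rcases lt_or_eq_of_le (Nat.lt_succ_iff.mp hℓ) with hlt | rfl
      · simpa [Nat.le_of_lt hlt, Nat.succ_le_of_lt hlt] using hp ℓ hlt
      · simpa [hpk] using h2

end Aux

section Shift

variable {K : Type*} [CommRing K] {n : Type*} [Fintype n] [DecidableEq n]

lemma charpoly_sub_smul_one (M : Matrix n n K) (μ : K) :
    (M - μ • 1).charpoly = M.charpoly.comp (X + C μ) := by
  have hψ : ∀ p : K[X], (Polynomial.algEquivAevalXAddC μ : K[X] →+* K[X]) p = p.comp (X + C μ) := by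
    intro p
    rfl
  have key : ((Polynomial.algEquivAevalXAddC μ : K[X] →+* K[X]).mapMatrix (charmatrix M))
      = charmatrix (M - μ • 1) := by
    ext i j
    simp only [RingHom.mapMatrix_apply, Matrix.map_apply, charmatrix_apply, hψ]
    rcases eq_or_ne i j with rfl | hne
    · simp [Matrix.diagonal_apply_eq, Matrix.one_apply, Matrix.sub_apply, Matrix.smul_apply]
      ring
    · simp [Matrix.diagonal_apply_ne _ hne, Matrix.one_apply_ne hne, Matrix.sub_apply,
        Matrix.smul_apply, hne]
  calc (M - μ • 1).charpoly = ((Polynomial.algEquivAevalXAddC μ : K[X] →+* K[X]).mapMatrix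
        (charmatrix M)).det := by rw [key]; rfl
    _ = (Polynomial.algEquivAevalXAddC μ : K[X] →+* K[X]) M.charpoly := by
        rw [← RingHom.map_det]; rfl
    _ = M.charpoly.comp (X + C μ) := hψ _

end Shift

namespace DetAcyclic

noncomputable def phi (M : Matrix (Fin d) (Fin d) ℂ) : Module.End ℂ (Fin d → ℂ) :=
  Matrix.toLinAlgEquiv' M

lemma charpoly_phi (M : Matrix (Fin d) (Fin d) ℂ) :
    LinearMap.charpoly (phi M) = M.charpoly := by
  rw [← LinearMap.charpoly_toMatrix (phi M) (Pi.basisFun ℂ (Fin d)),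
    LinearMap.toMatrix_eq_toMatrix']
  congr 1
  show LinearMap.toMatrix' (Matrix.toLin' M) = M
  exact LinearMap.toMatrix'_toLin' M

lemma finrank_maxGen_eq_count (M : Matrix (Fin d) (Fin d) ℂ) (μ : ℂ) :
    Module.finrank ℂ ((phi M).maxGenEigenspace μ) = M.charpoly.roots.count μ := by
  classical
  have h1 : (phi M).maxGenEigenspace μ = (phi M - μ • 1).maxGenEigenspace 0 := by
    ext x
    rw [Module.End.mem_maxGenEigenspace, Module.End.mem_maxGenEigenspace]
    simp
  have h2 : phi M - μ • 1 = phi (M - μ • 1) := by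
    rw [phi, phi, _root_.map_sub]
    congr 1
    rw [_root_.map_smul, _root_.map_one]
  rw [h1, h2, LinearMap.finrank_maxGenEigenspace_zero_eq]
  have h3 : LinearMap.charpoly (phi (M - μ • 1)) = M.charpoly.comp (X + C μ) := by
    rw [charpoly_phi, charpoly_sub_smul_one]
  rw [h3, Polynomial.count_roots, Polynomial.rootMultiplicity_eq_natTrailingDegree]

lemma trace_restrict_pow (f : Module.End ℂ (Fin d → ℂ)) (μ : ℂ) (n : ℕ)
    (h : Set.MapsTo (f ^ n) (f.maxGenEigenspace μ) (f.maxGenEigenspace μ)) :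
    LinearMap.trace ℂ _ ((f ^ n).restrict h)
      = μ ^ n * (Module.finrank ℂ (f.maxGenEigenspace μ)) := by
  classical
  set E := f.maxGenEigenspace μ
  have hmap : ∀ x ∈ E, f x ∈ E := f.mapsTo_maxGenEigenspace_of_comm rfl μ
  set g : Module.End ℂ E := f.restrict hmap with hg
  have hgn : (f ^ n).restrict h = g ^ n := (Module.End.pow_restrict n hmap).symm
  set N : Module.End ℂ E := g - μ • 1 with hN
  have hNeq : (f - algebraMap ℂ (Module.End ℂ (Fin d → ℂ)) μ).restrict
      (f.mapsTo_maxGenEigenspace_of_comm (Algebra.mul_sub_algebraMap_commutes f μ) μ) = N := by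
    ext x
    simp [hN, hg, LinearMap.restrict_coe_apply, LinearMap.sub_apply,
      Module.algebraMap_end_apply]
    rfl
  have hNnil : IsNilpotent N :=
    hNeq ▸ f.isNilpotent_restrict_maxGenEigenspace_sub_algebraMap μ
  have hcomm : Commute (μ • (1 : Module.End ℂ E)) N :=
    (Commute.one_left N).smul_left μ
  have hgeq : g = μ • 1 + N := by rw [hN]; abel
  have htraceN : ∀ k : ℕ, k ≠ 0 → LinearMap.trace ℂ E (N ^ k) = 0 := by
    intro k hk
    obtain ⟨r, hr⟩ := hNnil
    have : IsNilpotent (N ^ k) := ⟨r, by rw [← pow_mul, mul_comm, pow_mul, hr, zero_pow hk]⟩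
    exact (LinearMap.isNilpotent_trace_of_isNilpotent this).eq_zero
  rw [hgn, hgeq, Commute.add_pow hcomm, map_sum]
  rw [Finset.sum_eq_single n]
  · rw [_root_.smul_pow, one_pow, tsub_self, pow_zero, mul_one,
      show μ ^ n • (1 : Module.End ℂ E) * (n.choose n : Module.End ℂ E)
        = μ ^ n • ((n.choose n : ℕ) • (1 : Module.End ℂ E)) by
        rw [smul_mul_assoc, one_mul]
        norm_num,
      _root_.map_smul, map_nsmul, LinearMap.trace_one]
    simp [smul_eq_mul, Nat.choose_self]
  · intro m hm hmn
    have hne : n - m ≠ 0 := by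
      rw [Finset.mem_range] at hm; omega
    rw [show (μ • (1 : Module.End ℂ E)) ^ m * N ^ (n - m) * (n.choose m : Module.End ℂ E)
        = μ ^ m • ((n.choose m : ℕ) • (N ^ (n - m))) by
      rw [_root_.smul_pow, one_pow, smul_mul_assoc, one_mul, smul_mul_assoc]
      congr 1
      rw [nsmul_eq_mul, ← (Nat.cast_commute (n.choose m) (N ^ (n - m))).eq],
      _root_.map_smul, map_nsmul, htraceN _ hne]
    simp
  · intro hn
    exact absurd (Finset.self_mem_range_succ n) hn

lemma trace_pow_eq_sum_pow_roots (M : Matrix (Fin d) (Fin d) ℂ) (n : ℕ) :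
    (M ^ n).trace = (M.charpoly.roots.map (· ^ n)).sum := by
  classical
  set f := phi M with hf
  have hmapsto : ∀ μ : ℂ, Set.MapsTo (f ^ n) (f.maxGenEigenspace μ) (f.maxGenEigenspace μ) :=
    fun μ => f.mapsTo_maxGenEigenspace_of_comm ((Commute.refl f).pow_right n) μ
  have hInt : DirectSum.IsInternal f.maxGenEigenspace :=
    DirectSum.isInternal_submodule_of_iSupIndep_of_iSup_eq_top
      f.independent_maxGenEigenspace f.iSup_maxGenEigenspace_eq_top
  have hfin : {μ : ℂ | f.maxGenEigenspace μ ≠ ⊥}.Finite :=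
    WellFoundedGT.finite_ne_bot_of_iSupIndep f.independent_maxGenEigenspace
  -- trace of M^n as trace of endomorphism
  have htr : (M ^ n).trace = LinearMap.trace ℂ _ (f ^ n) := by
    have : f ^ n = phi (M ^ n) := by simp [hf, phi, map_pow]
    rw [this, LinearMap.trace_eq_matrix_trace ℂ (Pi.basisFun ℂ (Fin d)),
      LinearMap.toMatrix_eq_toMatrix']
    congr 1
    exact (LinearMap.toMatrix'_toLin' (M ^ n)).symm
  rw [htr, LinearMap.trace_eq_sum_trace_restrict' hInt hfin hmapsto]
  have hterm : ∀ μ : ℂ, LinearMap.trace ℂ _ ((f ^ n).restrict (hmapsto μ))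
      = μ ^ n * (M.charpoly.roots.count μ : ℂ) := by
    intro μ
    rw [trace_restrict_pow f μ n (hmapsto μ), ← finrank_maxGen_eq_count M μ]
  simp_rw [hterm]
  rw [Finset.sum_multiset_map_count]
  -- both sums over possibly different finsets; compare via subset extensions
  have hzero1 : ∀ μ : ℂ, μ ∉ hfin.toFinset → μ ^ n * (M.charpoly.roots.count μ : ℂ) = 0 := by
    intro μ hμ
    have : f.maxGenEigenspace μ = ⊥ := by simpa using hμ
    have h0 : M.charpoly.roots.count μ = 0 := by
      rw [← finrank_maxGen_eq_count M μ, this]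
      simp
    rw [h0]; simp
  have hzero2 : ∀ μ : ℂ, μ ∉ M.charpoly.roots.toFinset →
      μ ^ n * (M.charpoly.roots.count μ : ℂ) = 0 := by
    intro μ hμ
    rw [Multiset.count_eq_zero_of_notMem (by simpa using hμ)]
    simp
  rw [show ∑ μ ∈ hfin.toFinset, μ ^ n * (M.charpoly.roots.count μ : ℂ)
      = ∑ μ ∈ hfin.toFinset ∪ M.charpoly.roots.toFinset,
        μ ^ n * (M.charpoly.roots.count μ : ℂ) from
    Finset.sum_subset Finset.subset_union_left (fun μ _ hμ => hzero1 μ hμ)]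
  rw [show ∑ μ ∈ M.charpoly.roots.toFinset, M.charpoly.roots.count μ • μ ^ n
      = ∑ μ ∈ hfin.toFinset ∪ M.charpoly.roots.toFinset,
        M.charpoly.roots.count μ • μ ^ n from
    Finset.sum_subset Finset.subset_union_right (fun μ _ hμ => by
      rw [Multiset.count_eq_zero_of_notMem (by simpa using hμ)]; simp)]
  refine Finset.sum_congr rfl fun μ _ => ?_
  rw [nsmul_eq_mul, mul_comm]

end DetAcyclic

section MultisetAux


lemma multiset_hasSum (s : Multiset ℂ) (f : ℂ → ℕ → ℂ) (g : ℂ → ℂ)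
    (h : ∀ z ∈ s, HasSum (f z) (g z)) :
    HasSum (fun n => (s.map (fun z => f z n)).sum) ((s.map g).sum) := by
  induction s using Multiset.induction_on with
  | empty => simpa using hasSum_zero
  | cons a s ih =>
      simp only [Multiset.map_cons, Multiset.sum_cons]
      exact (h a (Multiset.mem_cons_self a s)).add
        (ih fun z hz => h z (Multiset.mem_cons_of_mem hz))

lemma multiset_exp_sum (s : Multiset ℂ) :
    Complex.exp s.sum = (s.map Complex.exp).prod := by
  induction s using Multiset.induction_on with
  | empty => simp
  | cons a s ih => simp [Complex.exp_add, ih]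

lemma multiset_sum_map_neg {α : Type*} (s : Multiset α) (f : α → ℂ) :
    (s.map (fun x => -(f x))).sum = -(s.map f).sum := by
  induction s using Multiset.induction_on with
  | empty => simp
  | cons a s ih => simp [ih]; ring

end MultisetAux

end DetAcyclicAux

theorem det_one_sub_pos_le_one_and_eq_one_iff_isAcyclic
    {d : ℕ} (hd : 1 ≤ d) (A : Matrix (Fin d) (Fin d) ℝ)
    (hA : ∀ i j, 0 ≤ A i j)
    (hspec : ∀ μ : ℂ, ((A.map (Complex.ofReal : ℝ → ℂ)).charpoly.IsRoot μ) →
      ‖μ‖ < 1) :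
    0 < Matrix.det (1 - A) ∧ Matrix.det (1 - A) ≤ 1 ∧
      (Matrix.det (1 - A) = 1 ↔ isAcyclic A) := by
  classical
  set Mc : Matrix (Fin d) (Fin d) ℂ := A.map (Complex.ofReal : ℝ → ℂ) with hMcdef
  have hMc' : Mc = (Complex.ofRealHom : ℝ →+* ℂ).mapMatrix A := rfl
  set R : Multiset ℂ := Mc.charpoly.roots with hR
  have hlt : ∀ μ ∈ R, ‖μ‖ < 1 := by
    intro μ hμ
    have := hspec μ ((Polynomial.mem_roots'.mp hμ).2)
    exact this
  have hne1 : ∀ μ ∈ R, (1 : ℂ) - μ ≠ 0 := by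
    intro μ hμ h
    have h1 : μ = 1 := by
      have := sub_eq_zero.mp h
      exact this.symm
    have := hlt μ hμ
    rw [h1] at this
    simp at this
  -- trace link
  have htrace : ∀ n : ℕ, (Mc ^ n).trace = (((A ^ n).trace : ℝ) : ℂ) := by
    intro n
    rw [hMc', ← map_pow]
    simp [Matrix.trace, Matrix.diag, RingHom.mapMatrix_apply, Matrix.map_apply]
  -- complex HasSum
  have hsum2 : HasSum (fun n : ℕ => (R.map (fun μ : ℂ => μ ^ n / (n : ℂ))).sum)
      ((R.map (fun μ => -Complex.log (1 - μ))).sum) :=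
    multiset_hasSum R _ _ fun μ hμ => Complex.hasSum_taylorSeries_neg_log (hlt μ hμ)
  set Ltot : ℂ := (R.map (fun μ => -Complex.log (1 - μ))).sum with hLtot
  set u : ℕ → ℝ := fun n => (A ^ n).trace / n with hu
  have hterm : (fun n : ℕ => (R.map (fun μ : ℂ => μ ^ n / (n : ℂ))).sum)
      = fun n => ((u n : ℝ) : ℂ) := by
    funext n
    have h1 : (R.map (fun μ : ℂ => μ ^ n / (n : ℂ))).sum = (R.map (fun μ : ℂ => μ ^ n)).sum * (n : ℂ)⁻¹ := by
      simp_rw [div_eq_mul_inv]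
      exact Multiset.sum_map_mul_right
    rw [h1, ← DetAcyclic.trace_pow_eq_sum_pow_roots, htrace n, hu]
    push_cast
    ring
  rw [hterm] at hsum2
  have hsplit := (Complex.hasSum_iff _ _).mp hsum2
  have hs : HasSum u Ltot.re := by simpa using hsplit.1
  have him : Ltot.im = 0 := by
    have h0 : HasSum (fun _ : ℕ => (0 : ℝ)) Ltot.im := by simpa using hsplit.2
    exact (hasSum_zero.unique h0).symm
  set s : ℝ := Ltot.re with hsdef
  have hLreal : Ltot = (s : ℂ) := by
    apply Complex.ext
    · simp [hsdef]
    · simp [him]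
  have htrace_nonneg : ∀ n : ℕ, 0 ≤ (A ^ n).trace := by
    intro n
    exact Finset.sum_nonneg fun i _ => pow_entry_nonneg hA n i i
  have hu0 : ∀ n, 0 ≤ u n := fun n => div_nonneg (htrace_nonneg n) (Nat.cast_nonneg n)
  have hs0 : 0 ≤ s := hs.nonneg hu0
  -- determinant identity
  have hdet : Matrix.det (1 - A) = Real.exp (-s) := by
    have hchain : ((Matrix.det (1 - A) : ℝ) : ℂ) = ((Real.exp (-s) : ℝ) : ℂ) := by
      calc ((Matrix.det (1 - A) : ℝ) : ℂ)
          = Matrix.det (1 - Mc) := by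
            rw [show ((Matrix.det (1 - A) : ℝ) : ℂ)
                = Complex.ofRealHom (Matrix.det (1 - A)) from rfl,
              RingHom.map_det]
            congr 1
            rw [_root_.map_sub, _root_.map_one, hMc']
        _ = Mc.charpoly.eval 1 := by
            rw [Matrix.charpoly,
              show Polynomial.eval (1 : ℂ) (Mc.charmatrix.det)
                = (Polynomial.evalRingHom (1 : ℂ)) (Mc.charmatrix.det) from rfl,
              RingHom.map_det]
            congr 1
            ext i j
            rcases eq_or_ne i j with rfl | hij
            · simp [Matrix.charmatrix_apply, Matrix.one_apply_eq, Matrix.sub_apply]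
            · simp [Matrix.charmatrix_apply, Matrix.one_apply_ne hij, Matrix.sub_apply,
                Matrix.diagonal_apply_ne _ hij, hij]
        _ = (R.map (fun μ => 1 - μ)).prod := by
            conv_lhs => rw [(IsAlgClosed.splits Mc.charpoly).eq_prod_roots_of_monic
              (Mc.charpoly_monic)]
            rw [Polynomial.eval_multiset_prod, Multiset.map_map]
            congr 1
            refine Multiset.map_congr rfl fun μ _ => ?_
            simp
        _ = Complex.exp (-Ltot) := by
            have hL' : -Ltot = (R.map (fun μ => Complex.log (1 - μ))).sum := by
              rw [hLtot, multiset_sum_map_neg R (fun μ => Complex.log (1 - μ)), neg_neg]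
            rw [hL', multiset_exp_sum, Multiset.map_map]
            congr 1
            refine Multiset.map_congr rfl fun μ hμ => ?_
            simp only [Function.comp_apply]
            exact (Complex.exp_log (hne1 μ hμ)).symm
        _ = ((Real.exp (-s) : ℝ) : ℂ) := by
            rw [hLreal, ← Complex.ofReal_neg, Complex.ofReal_exp]
    exact_mod_cast hchain
  refine ⟨by rw [hdet]; exact Real.exp_pos _, by
    rw [hdet]; exact Real.exp_le_one_iff.mpr (neg_nonpos.mpr hs0), ?_⟩
  rw [hdet]
  have hiff1 : Real.exp (-s) = 1 ↔ s = 0 := by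
    rw [Real.exp_eq_one_iff, neg_eq_zero]
  rw [hiff1]
  constructor
  · -- s = 0 → acyclic
    intro hs' k hk ⟨p, hp0, hp⟩
    have hpos : 0 < (A ^ k) (p k) (p k) := by
      have := pow_entry_pos_of_path hA k p hp
      rwa [hp0] at this
    have htr : 0 < (A ^ k).trace := by
      refine Finset.sum_pos' (fun i _ => pow_entry_nonneg hA k i i) ?_
      exact ⟨p k, Finset.mem_univ _, hpos⟩
    have hk' : 0 < u k := div_pos htr (by exact_mod_cast hk)
    have hle : u k ≤ s := le_hasSum hs k fun j _ => hu0 j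
    rw [hs'] at hle
    linarith
  · -- acyclic → s = 0
    intro hac
    have hzero : ∀ n, u n = 0 := by
      intro n
      rcases Nat.eq_zero_or_pos n with rfl | hn
      · simp [hu]
      · have htr0 : (A ^ n).trace = 0 := by
          by_contra hne
          have hpos : 0 < (A ^ n).trace := lt_of_le_of_ne (htrace_nonneg n) (Ne.symm hne)
          have : ∃ i : Fin d, 0 < (A ^ n) i i := by
            by_contra hc
            push_neg at hc
            have : (A ^ n).trace ≤ 0 := Finset.sum_nonpos fun i _ => hc i
            linarith
          obtain ⟨i, hi⟩ := this
          obtain ⟨p, hq0, hqn, hq⟩ := exists_path_of_pow_entry_pos hA n i i hi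
          exact hac n hn ⟨p, by rw [hq0, hqn], hq⟩
        simp [hu, htr0]
    have : HasSum u 0 := by
      rw [show u = fun _ => (0 : ℝ) from funext hzero]
      exact hasSum_zero
    exact hs.unique this
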